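/- For the Laurent polynomial P(t) = 3t^2 + 2 + 3t^{-1} + 3t^{-2} over 𝔽₅, the constant term of P(t)^n is nonzero in 𝔽₅ for all n with 0 ≤ n < 25 = 5^2, but there exists some n with ct(P^n) = 0 in 𝔽₅. -/

import Mathlib

/-!
Multiplying by `t ^ 2` turns `P` into the polynomial `Q = 3t⁴ + 2t² + 3t + 3`, so the constant term
of `P ^ n` is the coefficient of `t ^ (2n)` in `Q ^ n`. The coefficients of `Q ^ n` are modelled
exactly by coefficient lists with zero-padded arithmetic, which the kernel evaluates: the relevant
coefficient is nonzero for `n < 25` and vanishes for `n = 43`.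
-/

open LaurentPolynomial

noncomputable def P : LaurentPolynomial (ZMod 5) := 3 * T 2 + 2 + 3 * T (-1) + 3 * T (-2)

open Polynomial

namespace List

variable {R : Type*} [Semiring R]

def addCoeffs : List R → List R → List R
  | [], m => m
  | l, [] => l
  | a :: l, b :: m => (a + b) :: addCoeffs l m

def mulCoeffs : List R → List R → List R
  | [], _ => []
  | a :: l, m => addCoeffs (m.map (a * ·)) (0 :: mulCoeffs l m)

def powCoeffs (l : List R) : ℕ → List R
  | 0 => [1]
  | n + 1 => mulCoeffs l (powCoeffs l n)

theorem getD_addCoeffs (l m : List R) (k : ℕ) :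
    (addCoeffs l m).getD k 0 = l.getD k 0 + m.getD k 0 := by
  induction l, m using addCoeffs.induct generalizing k with
  | case1 m => simp [addCoeffs]
  | case2 l h => cases l <;> simp_all [addCoeffs]
  | case3 a l b m ih =>
    cases k <;> simp only [addCoeffs, List.getD_cons_zero, List.getD_cons_succ, ih]

end List

namespace Polynomial

variable {R : Type*} [Semiring R]

def HasCoeffs (p : R[X]) (l : List R) : Prop := ∀ k, p.coeff k = l.getD k 0

namespace HasCoeffs

variable {p q : R[X]} {a : R} {l m : List R}

theorem one : HasCoeffs (1 : R[X]) [1] := by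
  rintro (_ | k) <;> simp [coeff_one]

theorem add (hp : HasCoeffs p l) (hq : HasCoeffs q m) : HasCoeffs (p + q) (l.addCoeffs m) :=
  fun k => by rw [coeff_add, hp, hq, List.getD_addCoeffs]

theorem C_mul (a : R) (hp : HasCoeffs p l) : HasCoeffs (C a * p) (l.map (a * ·)) := fun k => by
  rw [coeff_C_mul, hp]
  by_cases hk : k < l.length <;> simp [List.getD_eq_getElem?_getD, hk]

theorem X_mul (hp : HasCoeffs p l) : HasCoeffs (X * p) (0 :: l)
  | 0 => by simp
  | k + 1 => by rw [coeff_X_mul, List.getD_cons_succ, hp]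

theorem divX (hp : HasCoeffs p (a :: l)) : HasCoeffs p.divX l := fun k => by
  rw [coeff_divX, hp]
  rfl

theorem mul (hp : HasCoeffs p l) (hq : HasCoeffs q m) : HasCoeffs (p * q) (l.mulCoeffs m) := by
  induction l generalizing p with
  | nil =>
    have hp0 : p = 0 := Polynomial.ext fun k => by simpa using hp k
    simp [hp0, List.mulCoeffs, HasCoeffs]
  | cons a l ih =>
    have hp_zero : p.coeff 0 = a := hp 0
    rw [← X_mul_divX_add p, hp_zero, add_mul, add_comm, mul_assoc]
    exact (hq.C_mul a).add (ih hp.divX).X_mul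

theorem pow (hp : HasCoeffs p l) (n : ℕ) : HasCoeffs (p ^ n) (l.powCoeffs n) := by
  induction n with
  | zero => exact one
  | succ n ih => rw [pow_succ']; exact hp.mul ih

end HasCoeffs

theorem coeff_toLaurent_natCast (f : R[X]) (n : ℕ) : (toLaurent f).coeff n = f.coeff n := by
  rw [coeff_toLaurent]
  exact Finsupp.mapDomain_apply Nat.castEmbedding.injective _ n

end Polynomial

namespace LaurentPolynomial

variable {R : Type*}

theorem coeff_T_mul [Semiring R] (m k : ℤ) (f : R[T;T⁻¹]) :
    (T m * f).coeff k = f.coeff (k - m) := by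
  rw [T, AddMonoidAlgebra.coeff_single_mul_apply, one_mul, neg_add_eq_sub]

theorem coeff_zero_pow_T_neg_mul_toLaurent [CommSemiring R] (q : R[X]) (d n : ℕ) :
    ((T (-d) * toLaurent q) ^ n).coeff 0 = (q ^ n).coeff (d * n) := by
  rw [mul_pow, T_pow, ← map_pow, coeff_T_mul, ← coeff_toLaurent_natCast]
  congr 1
  push_cast
  ring

end LaurentPolynomial

noncomputable def Q : (ZMod 5)[X] := 3 * X ^ 4 + 2 * X ^ 2 + 3 * X + 3

theorem P_eq_T_mul_toLaurent_Q : P = T (-2) * toLaurent Q := by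
  simp only [P, Q, map_add, map_mul, map_pow, map_ofNat, toLaurent_X, T_pow, mul_add,
    mul_left_comm (T (-2)), ← T_add]
  norm_num [T_zero]

theorem Q_hasCoeffs : Q.HasCoeffs [3, 3, 2, 0, 3] := by
  rintro (_ | _ | _ | _ | _ | k) <;> simp [Q, coeff_X, coeff_X_pow]

theorem coeff_zero_P_pow (n : ℕ) :
    (P ^ n).coeff 0 = (([3, 3, 2, 0, 3] : List (ZMod 5)).powCoeffs n).getD (2 * n) 0 := by
  rw [P_eq_T_mul_toLaurent_Q, show (-2 : ℤ) = -(2 : ℕ) from rfl,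
    coeff_zero_pow_T_neg_mul_toLaurent, Q_hasCoeffs.pow]

set_option maxRecDepth 10000 in
theorem stmt10 :
    (∀ n : ℕ, n < 5 ^ 2 → (P ^ n).coeff 0 ≠ 0) ∧ ∃ n : ℕ, (P ^ n).coeff 0 = 0 := by
  simp only [coeff_zero_P_pow]
  exact ⟨by decide, 43, by decide⟩
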